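/- arXiv:1006.5473 — 4 statements merged into one kernel-verified Lean document; each statement's English description precedes it below -/
import Mathlib

section
/- Comparison of capital levels of consecutive models: assume 0 = A_0 < A_1 < ⋯ < A_k, set A_{k+1} = ∞, let u_0,…,u_k > 0 and r > 0, and define l^i_t as in the comparison-model setup. Then for every 0 ≤ i ≤ k−1: (a) l^i_t = l^{i+1}_t for all 0 < t ≤ A_i; (b) l^i_t > l^{i+1}_t for all t ∈ (A_i, A_{i+1}]; (c) l^i_t < l^{i+1}_t for all t > A_{i+1}. -/
/-!
Up to `A_i` both models sit in the same undiscounted regime. On `(A_i, A_{i+1}]` the model `M^i`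
already counts the discounted later capitals, while `M^{i+1}` still holds only `u_0 + ⋯ + u_i`.
After `A_{i+1}` the model `M^{i+1}` holds `u_{i+1}` undiscounted and discounts every later capital
over the shorter horizon `A_j - A_{i+1}`, so it dominates `M^i` term by term, strictly at
`j = i + 1` because `r > 0`.
-/

noncomputable section

/-- Capital level `l^i_t` of the comparison model `M^i`:
`l^i_t = Σ_{j=0}^m u_j` if `t ∈ (A_m, A_{m+1}]` for some `m < i` (equivalently `t ≤ A_i`,
where `m` is the largest index with `A_m < t`), and
`l^i_t = Σ_{j=0}^i u_j + Σ_{j=i+1}^k u_j·e^{−r(A_j−A_i)}` for `t > A_i`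
(with the convention `A_{k+1} = ∞`). -/
def lvl (A u : ℕ → ℝ) (r : ℝ) (k i : ℕ) (t : ℝ) : ℝ :=
  if A i < t then
    (∑ j ∈ Finset.range (i + 1), u j)
      + ∑ j ∈ Finset.Icc (i + 1) k, u j * Real.exp (-(r * (A j - A i)))
  else
    ∑ j ∈ Finset.range (((Finset.range (k + 1)).filter (fun m => A m < t)).card), u j

open Finset Real

section Levels

variable {A u : ℕ → ℝ} {r t : ℝ} {k i : ℕ}

lemma lvl_of_lt (h : A i < t) :
    lvl A u r k i t = (∑ j ∈ range (i + 1), u j)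
      + ∑ j ∈ Icc (i + 1) k, u j * exp (-(r * (A j - A i))) :=
  if_pos h

lemma lvl_of_le (h : t ≤ A i) :
    lvl A u r k i t = ∑ j ∈ range #{m ∈ range (k + 1) | A m < t}, u j :=
  if_neg h.not_gt

lemma filter_range_lt_eq_range (hA : MonotoneOn A (Set.Iic k)) (hik : i + 1 ≤ k)
    (hit : A i < t) (hti : t ≤ A (i + 1)) :
    {m ∈ range (k + 1) | A m < t} = range (i + 1) := by
  ext m
  simp only [mem_filter, mem_range]
  constructor
  · rintro ⟨hmk, hmt⟩
    by_contra! him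
    have : A (i + 1) ≤ A m := hA (by simpa using hik) (by simpa [Nat.lt_succ_iff] using hmk) him
    linarith
  · intro him
    have : A m ≤ A i := hA (by simp; omega) (by simp; omega) (Nat.lt_succ_iff.mp him)
    exact ⟨by omega, this.trans_lt hit⟩

lemma sum_Icc_mul_exp_pos (hu : ∀ j, 0 < u j) (hik : i + 1 ≤ k) (a : ℝ) :
    0 < ∑ j ∈ Icc (i + 1) k, u j * exp (-(r * (A j - a))) :=
  sum_pos (fun j _ => mul_pos (hu j) (exp_pos _)) (nonempty_Icc.mpr hik)

lemma sum_Icc_mul_exp_lt (hr : 0 < r) (hu : ∀ j, 0 < u j) (hik : i + 1 ≤ k)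
    (hAi : A i < A (i + 1)) :
    ∑ j ∈ Icc (i + 1) k, u j * exp (-(r * (A j - A i)))
      < u (i + 1) + ∑ j ∈ Icc (i + 1 + 1) k, u j * exp (-(r * (A j - A (i + 1)))) := by
  rw [← insert_Icc_add_one_left_eq_Icc hik, sum_insert (by simp)]
  have head : u (i + 1) * exp (-(r * (A (i + 1) - A i))) < u (i + 1) :=
    mul_lt_of_lt_one_right (hu _) (exp_lt_one_iff.mpr (by nlinarith))
  have tail : ∑ j ∈ Icc (i + 1 + 1) k, u j * exp (-(r * (A j - A i)))
      ≤ ∑ j ∈ Icc (i + 1 + 1) k, u j * exp (-(r * (A j - A (i + 1)))) :=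
    sum_le_sum fun j _ => by have := (hu j).le; gcongr
  exact add_lt_add_of_lt_of_le head tail

end Levels

theorem level_comparison_consecutive_models_general
    (A u : ℕ → ℝ) (r : ℝ) (k : ℕ)
    (hAmono : ∀ i, i < k → A i < A (i + 1))
    (hu : ∀ j, 0 < u j) (hr : 0 < r)
    (i : ℕ) (hik : i + 1 ≤ k) :
    (∀ t : ℝ, 0 < t → t ≤ A i → lvl A u r k i t = lvl A u r k (i + 1) t)
    ∧ (∀ t : ℝ, A i < t → t ≤ A (i + 1) → lvl A u r k i t > lvl A u r k (i + 1) t)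
    ∧ (∀ t : ℝ, A (i + 1) < t → lvl A u r k i t < lvl A u r k (i + 1) t) := by
  have hA : StrictMonoOn A (Set.Iic k) := strictMonoOn_Iic_of_lt_succ hAmono
  have hAi : A i < A (i + 1) := hAmono i (by omega)
  refine ⟨fun t _ hti => ?_, fun t hit hti => ?_, fun t hti => ?_⟩
  · rw [lvl_of_le hti, lvl_of_le (hti.trans hAi.le)]
  · rw [lvl_of_lt hit, lvl_of_le hti, filter_range_lt_eq_range hA.monotoneOn hik hit hti,
      card_range]
    exact lt_add_of_pos_right _ (sum_Icc_mul_exp_pos hu hik _)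
  · rw [lvl_of_lt (hAi.trans hti), lvl_of_lt hti, sum_range_succ u (i + 1), add_assoc]
    exact add_lt_add_right (sum_Icc_mul_exp_lt hr hu hik hAi) _

/-- comparison of capital levels of consecutive models. Assuming
`0 = A_0 < A_1 < ⋯ < A_k`, `u_0,…,u_k > 0` and `r > 0`, for every `0 ≤ i ≤ k−1`:
(a) `l^i_t = l^{i+1}_t` for `0 < t ≤ A_i`, (b) `l^i_t > l^{i+1}_t` for `t ∈ (A_i, A_{i+1}]`,
(c) `l^i_t < l^{i+1}_t` for `t > A_{i+1}`. -/
theorem level_comparison_consecutive_models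
    (A u : ℕ → ℝ) (r : ℝ) (k : ℕ) (hk : 1 ≤ k)
    (hA0 : A 0 = 0) (hAmono : ∀ i, i < k → A i < A (i + 1))
    (hu : ∀ j, 0 < u j) (hr : 0 < r)
    (i : ℕ) (hik : i + 1 ≤ k) :
    (∀ t : ℝ, 0 < t → t ≤ A i → lvl A u r k i t = lvl A u r k (i + 1) t)
    ∧ (∀ t : ℝ, A i < t → t ≤ A (i + 1) → lvl A u r k i t > lvl A u r k (i + 1) t)
    ∧ (∀ t : ℝ, A (i + 1) < t → lvl A u r k i t < lvl A u r k (i + 1) t) :=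
  level_comparison_consecutive_models_general A u r k hAmono hu hr i hik
end
end

section
/- Ruin comparison before the first alarm: for every t with 0 < t ≤ A_1, one has Δ(t) = ψ(u_0, t) − ψ(u_0 + Σ_{j=1}^k e^{−r A_j} u_j, t). Moreover, if ψ̄(u_0, A_1) ≥ 1−β (the survival condition attained at the first alarm), then 0 ≤ Δ(t) ≤ ψ(u_0, A_1) − ψ(u_0 + Σ_{j=1}^k e^{−r A_j} u_j, t) ≤ β − ψ(u_0 + e^{−r t} Σ_{j=1}^k u_j, t) ≤ β. -/
open MeasureTheory ProbabilityTheory Set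

noncomputable section

/-- The net outgo process `R` of a Cramér–Lundberg model (compound Poisson minus linear
premium): `R 0 = 0`, càdlàg (right-continuous) paths, stationary independent increments,
each `R t` measurable. -/
structure CLProcess (Ω : Type) [MeasurableSpace Ω] (P : Measure Ω) where
  R : ℝ → Ω → ℝ
  meas : ∀ t, Measurable (R t)
  zero : ∀ ω, R 0 ω = 0
  cadlag : ∀ ω t, ContinuousWithinAt (fun s => R s ω) (Set.Ici t) t
  indep_incr : ∀ a : ℝ, 0 ≤ a →
    IndepFun (fun ω (s : ℝ) => R (a + s) ω - R a ω)
      (fun ω (s : Set.Icc (0:ℝ) a) => R s.1 ω) P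
  stat_incr : ∀ a : ℝ, 0 ≤ a →
    P.map (fun ω (s : ℝ) => R (a + s) ω - R a ω) = P.map (fun ω (s : ℝ) => R s ω)

variable {Ω : Type} [MeasurableSpace Ω]

/-- infinite-horizon ruin probability `ψ(u) = P[sup_{t>0} R_t > u]` -/
def psiInf (P : Measure Ω) (M : CLProcess Ω P) (u : ℝ) : ℝ :=
  (P {ω | ∃ t ∈ Set.Ioi (0:ℝ), M.R t ω > u}).toReal

/-- infinite-horizon survival probability `ψ̄(u) = 1 − ψ(u)` -/
def psiBarInf (P : Measure Ω) (M : CLProcess Ω P) (u : ℝ) : ℝ := 1 - psiInf P M u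

/-- finite-horizon ruin probability `ψ(u,t) = P[sup_{0<s≤t} R_s > u]` -/
def psiFin (P : Measure Ω) (M : CLProcess Ω P) (u t : ℝ) : ℝ :=
  (P {ω | ∃ s ∈ Set.Ioc (0:ℝ) t, M.R s ω > u}).toReal

/-- finite-horizon survival probability `ψ̄(u,t) = 1 − ψ(u,t)` -/
def psiBarFin (P : Measure Ω) (M : CLProcess Ω P) (u t : ℝ) : ℝ := 1 - psiFin P M u t

/-- `P[T^{M^i} ≤ t]`: finite-time ruin probability of the comparison model `M^i`,
whose ruin time is `T^{M^i} = inf{t>0 : R_t > l^i_t}`. -/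
def modelRuin (P : Measure Ω) (M : CLProcess Ω P) (A u : ℕ → ℝ) (r : ℝ) (k i : ℕ)
    (t : ℝ) : ℝ :=
  (P {ω | ∃ s ∈ Set.Ioc (0:ℝ) t, M.R s ω > lvl A u r k i s}).toReal

/-- `Δ(t) := P[T^{M^k} ≤ t] − P[T^{M_r} ≤ t]`, where `M_r = M^0` is the no-alarm model. -/
def Delta (P : Measure Ω) (M : CLProcess Ω P) (A u : ℕ → ℝ) (r : ℝ) (k : ℕ) (t : ℝ) : ℝ :=
  modelRuin P M A u r k k t - modelRuin P M A u r k 0 t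

/-! Up to the first alarm the alarm model `M^k` holds only `u_0`, while the no-alarm model holds
the constant discounted capital `u_0 + Σ_{j≥1} e^{-r A_j} u_j` from time `0` on; so both ruin
probabilities in `Δ(t)` are constant-capital finite-horizon ruin probabilities. The inequalities
then follow from `ψ(u,t)` being antitone in `u` and monotone in `t`, and `e^{-r A_j} ≤ e^{-r t}`. -/

lemma psiFin_le_psiFin (P : Measure Ω) [IsFiniteMeasure P] (M : CLProcess Ω P)
    {u₁ u₂ t₁ t₂ : ℝ} (hu : u₁ ≤ u₂) (ht : t₂ ≤ t₁) :
    psiFin P M u₂ t₂ ≤ psiFin P M u₁ t₁ := by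
  refine ENNReal.toReal_mono (measure_ne_top _ _) (measure_mono ?_)
  rintro ω ⟨s, hs, h⟩
  exact ⟨s, ⟨hs.1, hs.2.trans ht⟩, hu.trans_lt h⟩

lemma modelRuin_eq_psiFin_of_lvl_eq (P : Measure Ω) (M : CLProcess Ω P) {A u : ℕ → ℝ}
    {r c t : ℝ} {k i : ℕ} (hlvl : ∀ s ∈ Ioc 0 t, lvl A u r k i s = c) :
    modelRuin P M A u r k i t = psiFin P M c t := by
  unfold modelRuin psiFin
  congr 2
  ext ω
  exact exists_congr fun s => and_congr_right fun hs => by rw [hlvl s hs]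

lemma lvl_zero_of_pos {A u : ℕ → ℝ} {r s : ℝ} {k : ℕ} (hA0 : A 0 = 0) (hs : 0 < s) :
    lvl A u r k 0 s = u 0 + ∑ j ∈ Finset.Icc 1 k, Real.exp (-(r * A j)) * u j := by
  rw [lvl, if_pos (hA0 ▸ hs), Finset.sum_range_one]
  congr 1
  refine Finset.sum_congr rfl fun j _ => ?_
  rw [hA0, sub_zero, mul_comm]

lemma lvl_self_of_le_first_alarm {A u : ℕ → ℝ} {r s : ℝ} {k : ℕ} (hk : 1 ≤ k)
    (hA : MonotoneOn A (Iic k)) (hs₀ : A 0 < s) (hs₁ : s ≤ A 1) :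
    lvl A u r k k s = u 0 := by
  have hA1k : A 1 ≤ A k := hA (mem_Iic.2 hk) (mem_Iic.2 le_rfl) hk
  have hbefore : (Finset.range (k + 1)).filter (fun m => A m < s) = {0} := by
    ext m
    simp only [Finset.mem_filter, Finset.mem_range, Finset.mem_singleton]
    refine ⟨fun ⟨hm, hlt⟩ => ?_, fun hm => hm ▸ ⟨k.succ_pos, hs₀⟩⟩
    by_contra hm0
    have : A 1 ≤ A m :=
      hA (mem_Iic.2 hk) (mem_Iic.2 (Nat.lt_succ_iff.1 hm)) (Nat.one_le_iff_ne_zero.2 hm0)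
    linarith
  rw [lvl, if_neg (not_lt.2 (hs₁.trans hA1k)), hbefore, Finset.card_singleton,
    Finset.sum_range_one]

lemma sum_exp_mul_le_exp_mul_sum {ι : Type*} (S : Finset ι) {a u : ι → ℝ} {r t : ℝ}
    (hr : 0 ≤ r) (ha : ∀ j ∈ S, t ≤ a j) (hu : ∀ j ∈ S, 0 ≤ u j) :
    ∑ j ∈ S, Real.exp (-(r * a j)) * u j ≤ Real.exp (-(r * t)) * ∑ j ∈ S, u j := by
  rw [Finset.mul_sum]
  refine Finset.sum_le_sum fun j hj => mul_le_mul_of_nonneg_right ?_ (hu j hj)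
  exact Real.exp_le_exp.2 (neg_le_neg (mul_le_mul_of_nonneg_left (ha j hj) hr))

theorem ruin_comparison_before_first_alarm_general
    (P : Measure Ω) [IsProbabilityMeasure P] (M : CLProcess Ω P)
    (A u : ℕ → ℝ) (r β : ℝ) (k : ℕ) (hk : 1 ≤ k)
    (hA0 : A 0 = 0) (hAmono : ∀ i, i < k → A i < A (i + 1))
    (hu : ∀ j, 0 < u j) (hr : 0 < r)
    (t : ℝ) (ht1 : t ≤ A 1) :
    Delta P M A u r k t
        = psiFin P M (u 0) t
          - psiFin P M (u 0 + ∑ j ∈ Finset.Icc 1 k, Real.exp (-(r * A j)) * u j) t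
    ∧ (1 - psiFin P M (u 0) (A 1) ≥ 1 - β →
        0 ≤ Delta P M A u r k t
        ∧ Delta P M A u r k t
            ≤ psiFin P M (u 0) (A 1)
              - psiFin P M (u 0 + ∑ j ∈ Finset.Icc 1 k, Real.exp (-(r * A j)) * u j) t
        ∧ psiFin P M (u 0) (A 1)
              - psiFin P M (u 0 + ∑ j ∈ Finset.Icc 1 k, Real.exp (-(r * A j)) * u j) t
            ≤ β - psiFin P M (u 0 + Real.exp (-(r * t)) * ∑ j ∈ Finset.Icc 1 k, u j) t
        ∧ β - psiFin P M (u 0 + Real.exp (-(r * t)) * ∑ j ∈ Finset.Icc 1 k, u j) t ≤ β) := by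
  set S := ∑ j ∈ Finset.Icc 1 k, Real.exp (-(r * A j)) * u j
  have hA : MonotoneOn A (Iic k) := (strictMonoOn_Iic_of_lt_succ hAmono).monotoneOn
  have hDelta : Delta P M A u r k t = psiFin P M (u 0) t - psiFin P M (u 0 + S) t := by
    rw [Delta, modelRuin_eq_psiFin_of_lvl_eq P M fun s hs => lvl_zero_of_pos hA0 hs.1,
      modelRuin_eq_psiFin_of_lvl_eq P M fun s hs =>
        lvl_self_of_le_first_alarm hk hA (hA0 ▸ hs.1) (hs.2.trans ht1)]
  refine ⟨hDelta, fun hsurv => ?_⟩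
  have hS : 0 ≤ S := Finset.sum_nonneg fun j _ => mul_nonneg (Real.exp_pos _).le (hu j).le
  have hSle : S ≤ Real.exp (-(r * t)) * ∑ j ∈ Finset.Icc 1 k, u j :=
    sum_exp_mul_le_exp_mul_sum _ hr.le
      (fun j hj => ht1.trans (hA (mem_Iic.2 hk) (mem_Iic.2 (Finset.mem_Icc.1 hj).2)
        (Finset.mem_Icc.1 hj).1))
      fun j _ => (hu j).le
  have hcapital : psiFin P M (u 0 + S) t ≤ psiFin P M (u 0) t :=
    psiFin_le_psiFin P M (le_add_of_nonneg_right hS) le_rfl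
  have hhorizon : psiFin P M (u 0) t ≤ psiFin P M (u 0) (A 1) := psiFin_le_psiFin P M le_rfl ht1
  have hdiscount : psiFin P M (u 0 + Real.exp (-(r * t)) * ∑ j ∈ Finset.Icc 1 k, u j) t
      ≤ psiFin P M (u 0 + S) t :=
    psiFin_le_psiFin P M (add_le_add_right hSle (u 0)) le_rfl
  have hnonneg : 0 ≤ psiFin P M (u 0 + Real.exp (-(r * t)) * ∑ j ∈ Finset.Icc 1 k, u j) t :=
    ENNReal.toReal_nonneg
  rw [hDelta]
  refine ⟨?_, ?_, ?_, ?_⟩ <;> linarith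

/-- ruin comparison before the first alarm. For `0 < t ≤ A_1`,
`Δ(t) = ψ(u_0,t) − ψ(u_0 + Σ_{j=1}^k e^{−rA_j}u_j, t)`; and if `ψ̄(u_0,A_1) ≥ 1−β`, then
`0 ≤ Δ(t) ≤ ψ(u_0,A_1) − ψ(u_0 + Σ_{j=1}^k e^{−rA_j}u_j, t)`
`≤ β − ψ(u_0 + e^{−rt}Σ_{j=1}^k u_j, t) ≤ β`. -/
theorem ruin_comparison_before_first_alarm
    (P : Measure Ω) [IsProbabilityMeasure P] (M : CLProcess Ω P)
    (A u : ℕ → ℝ) (r β : ℝ) (k : ℕ) (hk : 1 ≤ k)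
    (hA0 : A 0 = 0) (hAmono : ∀ i, i < k → A i < A (i + 1))
    (hu : ∀ j, 0 < u j) (hr : 0 < r) (hβ : 0 < β ∧ β < 1)
    (t : ℝ) (ht0 : 0 < t) (ht1 : t ≤ A 1) :
    Delta P M A u r k t
        = psiFin P M (u 0) t
          - psiFin P M (u 0 + ∑ j ∈ Finset.Icc 1 k, Real.exp (-(r * A j)) * u j) t
    ∧ (1 - psiFin P M (u 0) (A 1) ≥ 1 - β →
        0 ≤ Delta P M A u r k t
        ∧ Delta P M A u r k t
            ≤ psiFin P M (u 0) (A 1)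
              - psiFin P M (u 0 + ∑ j ∈ Finset.Icc 1 k, Real.exp (-(r * A j)) * u j) t
        ∧ psiFin P M (u 0) (A 1)
              - psiFin P M (u 0 + ∑ j ∈ Finset.Icc 1 k, Real.exp (-(r * A j)) * u j) t
            ≤ β - psiFin P M (u 0 + Real.exp (-(r * t)) * ∑ j ∈ Finset.Icc 1 k, u j) t
        ∧ β - psiFin P M (u 0 + Real.exp (-(r * t)) * ∑ j ∈ Finset.Icc 1 k, u j) t ≤ β) :=
  ruin_comparison_before_first_alarm_general P M A u r β k hk hA0 hAmono hu hr t ht1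
end
end

section
/- Exact expression for one telescoping term: for 2 ≤ i ≤ k, every t ∈ (A_{i−1}, A_i], and P(B_{i−1}) > 0, one has P[T^{M^{i−1}} > t] − P[T^{M^i} > t] = P( B_{i−1} ∩ {sup_{A_{i−1}<s≤t} R_s > l^i_{A_i}} ) − P( B_{i−1} ∩ {sup_{A_{i−1}<s≤t} R_s > l^{i−1}_{A_i}} ), i.e. it equals P(B_{i−1}) · [ ψ_{A_{i−1}}( l^i_{A_i}, t | B_{i−1} ) − ψ_{A_{i−1}}( l^{i−1}_{A_i}, t | B_{i−1} ) ], where ψ_a(v, t | B) := P[ sup_{a<s≤t} R_s > v | B ]. -/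
open MeasureTheory ProbabilityTheory Set

noncomputable section

variable {Ω : Type} [MeasurableSpace Ω]

/-- `P[T^{M^i} > t]`: finite-time survival probability of the comparison model `M^i`. -/
def modelSurv (P : Measure Ω) (M : CLProcess Ω P) (A u : ℕ → ℝ) (r : ℝ) (k i : ℕ)
    (t : ℝ) : ℝ :=
  (P {ω | ∀ s ∈ Set.Ioc (0:ℝ) t, M.R s ω ≤ lvl A u r k i s}).toReal

/-- `B_i := {T^{M^k} > A_i}`, the event of no ruin up to `A_i` under the alarm system. -/
def Bset (P : Measure Ω) (M : CLProcess Ω P) (A u : ℕ → ℝ) (r : ℝ) (k i : ℕ) : Set Ω :=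
  {ω | ∀ s ∈ Set.Ioc (0:ℝ) (A i), M.R s ω ≤ lvl A u r k k s}

/-
On `(0, A_{i-1}]` both levels `l^{i-1}` and `l^i` coincide with the alarm level `l^k`, while on
`(A_{i-1}, A_i]` each of them is constant, equal to its value at `A_i`. Hence, for
`t ∈ (A_{i-1}, A_i]` and `j ∈ {i-1, i}`, survival of `M^j` up to `t` is the event `B_{i-1}` minus
the event that `R` exceeds the constant `l^j_{A_i}` somewhere in `(A_{i-1}, t]`. The latter is
measurable by right-continuity of the paths, and the identity follows by additivity of `P`.
-/

open Filter Topology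

lemma exists_rat_mem_Ioc_lt_of_continuousWithinAt {f : ℝ → ℝ} {s t c : ℝ}
    (hf : ContinuousWithinAt f (Ici s) s) (hc : c < f s) (hst : s < t) :
    ∃ q : ℚ, (q : ℝ) ∈ Ioc s t ∧ c < f q := by
  have hev : ∀ᶠ x in 𝓝[>] s, c < f x ∧ x < t :=
    ((hf.mono Ioi_subset_Ici_self).eventually (lt_mem_nhds hc)).and
      (nhdsWithin_le_nhds (gt_mem_nhds hst))
  obtain ⟨w, hsw, hsub⟩ := mem_nhdsGT_iff_exists_Ioo_subset.mp hev
  obtain ⟨q, hsq, hqw⟩ := exists_rat_btwn (mem_Ioi.mp hsw)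
  obtain ⟨hcq, hqt⟩ := hsub ⟨hsq, hqw⟩
  exact ⟨q, ⟨hsq, hqt.le⟩, hcq⟩

lemma setOf_exists_Ioc_lt_eq_biUnion {α : Type*} (R : ℝ → α → ℝ)
    (hR : ∀ ω s, ContinuousWithinAt (fun s => R s ω) (Ici s) s) (a t c : ℝ) :
    {ω | ∃ s ∈ Ioc a t, c < R s ω}
      = ⋃ s ∈ Ioc a t ∩ insert t (range ((↑) : ℚ → ℝ)), {ω | c < R s ω} := by
  ext ω
  simp only [mem_ofPred_eq, mem_iUnion, exists_prop]
  constructor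
  · rintro ⟨s, hs, hcs⟩
    rcases hs.2.eq_or_lt with rfl | hst
    · exact ⟨s, ⟨hs, mem_insert _ _⟩, hcs⟩
    obtain ⟨q, hq, hcq⟩ := exists_rat_mem_Ioc_lt_of_continuousWithinAt (hR ω s) hcs hst
    exact ⟨q, ⟨⟨hs.1.trans hq.1, hq.2⟩, mem_insert_of_mem _ ⟨q, rfl⟩⟩, hcq⟩
  · rintro ⟨s, hs, hcs⟩
    exact ⟨s, hs.1, hcs⟩

lemma measurableSet_exists_Ioc_lt {R : ℝ → Ω → ℝ} (hmeas : ∀ s, Measurable (R s))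
    (hR : ∀ ω s, ContinuousWithinAt (fun s => R s ω) (Ici s) s) (a t c : ℝ) :
    MeasurableSet {ω | ∃ s ∈ Ioc a t, c < R s ω} := by
  rw [setOf_exists_Ioc_lt_eq_biUnion R hR]
  exact .biUnion (((countable_range _).insert t).mono inter_subset_right)
    fun s _ => measurableSet_lt measurable_const (hmeas s)

lemma setOf_forall_Ioc_le_eq_inter {α : Type*} (R : ℝ → α → ℝ) {f g : ℝ → ℝ} {a t c : ℝ}
    (ha : 0 ≤ a) (hat : a ≤ t) (hfg : EqOn f g (Ioc 0 a)) (hfc : ∀ s ∈ Ioc a t, f s = c) :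
    {ω | ∀ s ∈ Ioc 0 t, R s ω ≤ f s}
      = {ω | ∀ s ∈ Ioc 0 a, R s ω ≤ g s} ∩ {ω | ∃ s ∈ Ioc a t, c < R s ω}ᶜ := by
  ext ω
  simp only [← Ioc_union_Ioc_eq_Ioc ha hat, mem_union, or_imp, forall_and, mem_inter_iff,
    mem_compl_iff, mem_ofPred_eq, not_exists, not_and, not_lt]
  refine and_congr (forall₂_congr fun s hs => by rw [hfg hs]) (forall₂_congr fun s hs => ?_)
  rw [hfc s hs]

section Levels

variable {A u : ℕ → ℝ} {r : ℝ} {k : ℕ}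

lemma alarm_lt_iff_lt (hA : MonotoneOn A (Iic k)) {m n : ℕ} (hm : m ≤ k) (hn : n ≤ k) {s : ℝ}
    (hs : s ∈ Ioc (A (m - 1)) (A m)) : A n < s ↔ n < m := by
  constructor
  · intro hns
    by_contra! hmn
    exact (hs.2.trans (hA hm hn hmn)).not_gt hns
  · intro hnm
    exact (hA (show n ≤ k by omega) (show m - 1 ≤ k by omega) (by omega)).trans_lt hs.1

lemma lvl_eq_of_mem_Ioc (hA : MonotoneOn A (Iic k)) {m j : ℕ} (hm : m ≤ k) (hj : j ≤ k)
    {s s' : ℝ} (hs : s ∈ Ioc (A (m - 1)) (A m)) (hs' : s' ∈ Ioc (A (m - 1)) (A m)) :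
    lvl A u r k j s = lvl A u r k j s' := by
  have key : ∀ n ≤ k, (A n < s ↔ A n < s') := fun n hn =>
    (alarm_lt_iff_lt hA hm hn hs).trans (alarm_lt_iff_lt hA hm hn hs').symm
  have hfilter : (Finset.range (k + 1)).filter (fun n => A n < s)
      = (Finset.range (k + 1)).filter (fun n => A n < s') :=
    Finset.filter_congr fun n hn => key n (Nat.lt_succ_iff.mp (Finset.mem_range.mp hn))
  simp only [lvl, key j hj, hfilter]

lemma lvl_eq_of_le_alarm {j j' : ℕ} {s : ℝ} (hj : s ≤ A j) (hj' : s ≤ A j') :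
    lvl A u r k j s = lvl A u r k j' s := by
  simp only [lvl, if_neg hj.not_gt, if_neg hj'.not_gt]

end Levels

lemma measureReal_inter_compl_sub {μ : Measure Ω} [IsFiniteMeasure μ] (B : Set Ω)
    {E E' : Set Ω} (hE : MeasurableSet E) (hE' : MeasurableSet E') :
    μ.real (B ∩ E'ᶜ) - μ.real (B ∩ Eᶜ) = μ.real (B ∩ E) - μ.real (B ∩ E') := by
  have h := measureReal_inter_add_sdiff (μ := μ) (s := B) hE
  have h' := measureReal_inter_add_sdiff (μ := μ) (s := B) hE'
  rw [sdiff_eq] at h h'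
  linarith

lemma toReal_measure_mul_cond {μ : Measure Ω} [IsFiniteMeasure μ] (B : Set Ω) {E : Set Ω}
    (hE : MeasurableSet E) : (μ B).toReal * (μ[E | B]).toReal = (μ (B ∩ E)).toReal := by
  rw [← ENNReal.toReal_mul, cond_apply' hE, ← mul_assoc]
  by_cases hB : μ B = 0
  · simp [hB, measure_mono_null inter_subset_left hB]
  · rw [ENNReal.mul_inv_cancel hB (measure_ne_top μ B), one_mul]

theorem telescoping_term_exact_general
    (P : Measure Ω) [IsProbabilityMeasure P] (M : CLProcess Ω P)
    (A u : ℕ → ℝ) (r : ℝ) (k : ℕ)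
    (hA0 : A 0 = 0) (hAmono : ∀ i, i < k → A i < A (i + 1))
    (i : ℕ) (hik : i ≤ k)
    (t : ℝ) (ht1 : A (i - 1) < t) (ht2 : t ≤ A i) :
    modelSurv P M A u r k (i - 1) t - modelSurv P M A u r k i t
        = (P (Bset P M A u r k (i - 1)
            ∩ {ω | ∃ s ∈ Set.Ioc (A (i - 1)) t, M.R s ω > lvl A u r k i (A i)})).toReal
          - (P (Bset P M A u r k (i - 1)
            ∩ {ω | ∃ s ∈ Set.Ioc (A (i - 1)) t,
                M.R s ω > lvl A u r k (i - 1) (A i)})).toReal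
    ∧ modelSurv P M A u r k (i - 1) t - modelSurv P M A u r k i t
        = (P (Bset P M A u r k (i - 1))).toReal
          * (((ProbabilityTheory.cond P (Bset P M A u r k (i - 1)))
                {ω | ∃ s ∈ Set.Ioc (A (i - 1)) t, M.R s ω > lvl A u r k i (A i)}).toReal
             - ((ProbabilityTheory.cond P (Bset P M A u r k (i - 1)))
                {ω | ∃ s ∈ Set.Ioc (A (i - 1)) t,
                  M.R s ω > lvl A u r k (i - 1) (A i)}).toReal) := by
  have hA : MonotoneOn A (Iic k) := (strictMonoOn_Iic_of_lt_succ hAmono).monotoneOn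
  have hA_le : ∀ {m n}, m ≤ n → n ≤ k → A m ≤ A n := fun hmn hn =>
    hA (show _ ≤ k by omega) hn hmn
  have hE : ∀ j, MeasurableSet {ω | ∃ s ∈ Ioc (A (i - 1)) t, M.R s ω > lvl A u r k j (A i)} :=
    fun j => measurableSet_exists_Ioc_lt M.meas M.cadlag _ _ _
  have hsurv : ∀ j, i - 1 ≤ j → j ≤ i → modelSurv P M A u r k j t
      = P.real (Bset P M A u r k (i - 1)
          ∩ {ω | ∃ s ∈ Ioc (A (i - 1)) t, M.R s ω > lvl A u r k j (A i)}ᶜ) := by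
    intro j hj hji
    rw [modelSurv, setOf_forall_Ioc_le_eq_inter M.R (hA0 ▸ hA_le (Nat.zero_le _) (by omega))
      ht1.le (g := lvl A u r k k) (c := lvl A u r k j (A i))]
    · rfl
    · exact fun s hs => lvl_eq_of_le_alarm (hs.2.trans (hA_le hj (by omega)))
        (hs.2.trans (hA_le (by omega) le_rfl))
    · exact fun s hs => lvl_eq_of_mem_Ioc hA hik (by omega) ⟨hs.1, hs.2.trans ht2⟩
        ⟨ht1.trans_le ht2, le_rfl⟩
  have hdiff := measureReal_inter_compl_sub (μ := P) (Bset P M A u r k (i - 1)) (hE i) (hE (i - 1))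
  rw [← hsurv (i - 1) le_rfl (by omega), ← hsurv i (by omega) le_rfl] at hdiff
  refine ⟨hdiff, ?_⟩
  rw [hdiff, mul_sub, toReal_measure_mul_cond _ (hE i), toReal_measure_mul_cond _ (hE (i - 1))]
  rfl

/-- exact expression for one telescoping term. For `2 ≤ i ≤ k`,
`t ∈ (A_{i−1}, A_i]` and `P(B_{i−1}) > 0`,
`P[T^{M^{i−1}}>t] − P[T^{M^i}>t] = P(B_{i−1} ∩ {sup_{A_{i−1}<s≤t} R_s > l^i_{A_i}})`
`− P(B_{i−1} ∩ {sup_{A_{i−1}<s≤t} R_s > l^{i−1}_{A_i}})`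
`= P(B_{i−1})·[ψ_{A_{i−1}}(l^i_{A_i}, t | B_{i−1}) − ψ_{A_{i−1}}(l^{i−1}_{A_i}, t | B_{i−1})]`. -/
theorem telescoping_term_exact
    (P : Measure Ω) [IsProbabilityMeasure P] (M : CLProcess Ω P)
    (A u : ℕ → ℝ) (r : ℝ) (k : ℕ) (hk : 1 ≤ k)
    (hA0 : A 0 = 0) (hAmono : ∀ i, i < k → A i < A (i + 1))
    (hu : ∀ j, 0 < u j) (hr : 0 < r)
    (i : ℕ) (hi2 : 2 ≤ i) (hik : i ≤ k)
    (t : ℝ) (ht1 : A (i - 1) < t) (ht2 : t ≤ A i)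
    (hPB : 0 < P (Bset P M A u r k (i - 1))) :
    modelSurv P M A u r k (i - 1) t - modelSurv P M A u r k i t
        = (P (Bset P M A u r k (i - 1)
            ∩ {ω | ∃ s ∈ Set.Ioc (A (i - 1)) t, M.R s ω > lvl A u r k i (A i)})).toReal
          - (P (Bset P M A u r k (i - 1)
            ∩ {ω | ∃ s ∈ Set.Ioc (A (i - 1)) t,
                M.R s ω > lvl A u r k (i - 1) (A i)})).toReal
    ∧ modelSurv P M A u r k (i - 1) t - modelSurv P M A u r k i t
        = (P (Bset P M A u r k (i - 1))).toReal
          * (((ProbabilityTheory.cond P (Bset P M A u r k (i - 1)))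
                {ω | ∃ s ∈ Set.Ioc (A (i - 1)) t, M.R s ω > lvl A u r k i (A i)}).toReal
             - ((ProbabilityTheory.cond P (Bset P M A u r k (i - 1)))
                {ω | ∃ s ∈ Set.Ioc (A (i - 1)) t,
                  M.R s ω > lvl A u r k (i - 1) (A i)}).toReal) :=
  telescoping_term_exact_general P M A u r k hA0 hAmono i hik t ht1 ht2
end
end

section
/- Upper bound for one telescoping term: for 2 ≤ i ≤ k and every t ∈ (A_{i−1}, A_i], P[T^{M^{i−1}} > t] − P[T^{M^i} > t] ≤ P(B_{i−1}) · sup_{x ≤ l^{i−1}_{A_{i−1}}} [ ψ( l^i_{A_i} − x, t − A_{i−1} ) − ψ( l^{i−1}_{A_i} − x, t − A_{i−1} ) ] ≤ P(B_{i−1}) · ψ( u_{i−1}, t − A_{i−1} ), where ψ(v,s) := P[sup_{0<τ≤s} R_τ > v] and the last step uses l^i_{A_i} − l^{i−1}_{A_{i−1}} = u_{i−1}. -/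
/-!
Up to time `A_{i-1}` the models `M^{i-1}`, `M^i` and the alarm system share the same capital level;
on `(A_{i-1}, A_i]` the level of `M^i` is the constant `l^i_{A_i}` and that of `M^{i-1}` the larger
constant `l^{i-1}_{A_i}`. Survival under `M^{i-1}` together with ruin under `M^i` therefore means:
no ruin up to `A_{i-1}` (the event `B_{i-1}`), and afterwards the increment of `R` exceeds
`l^i_{A_i} - R_{A_{i-1}}` but not `l^{i-1}_{A_i} - R_{A_{i-1}}`. The increments after `A_{i-1}`
are independent of the past and distributed as `R`, so integrating over the past gives at most
`ψ(l^i_{A_i} - x) - ψ(l^{i-1}_{A_i} - x)` with `x = R_{A_{i-1}} ≤ l^{i-1}_{A_{i-1}}` on `B_{i-1}`.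
Path events are made measurable by restricting to rational times, which loses nothing for
right-continuous paths. The second bound is monotonicity of `ψ` in the capital together with
`l^i_{A_i} - l^{i-1}_{A_{i-1}} = u_{i-1}`.
-/

open MeasureTheory ProbabilityTheory Set

noncomputable section

variable {Ω : Type} [MeasurableSpace Ω]

lemma measurableSet_forall_mem_le {ι γ : Type*} [MeasurableSpace γ] {D : Set ι}
    (hD : D.Countable) {F G : ι → γ → ℝ} (hF : ∀ q, Measurable (F q))
    (hG : ∀ q, Measurable (G q)) : MeasurableSet {x | ∀ q ∈ D, F q x ≤ G q x} := by
  have : {x | ∀ q ∈ D, F q x ≤ G q x} = ⋂ q ∈ D, {x | F q x ≤ G q x} := by ext; simp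
  exact this ▸ .biInter hD fun q _ => measurableSet_le (hF q) (hG q)

theorem ProbabilityTheory.IndepFun.measure_preimage_le_mul {Ω' α β : Type*}
    {_ : MeasurableSpace Ω'} [MeasurableSpace α] [MeasurableSpace β] {μ : Measure Ω'}
    [IsFiniteMeasure μ] {X : Ω' → α} {Y : Ω' → β} (hXY : IndepFun X Y μ) (hX : Measurable X)
    (hY : Measurable Y) {E : Set (α × β)} (hE : MeasurableSet E) {G : Set β}
    (hG : MeasurableSet G) (hEG : ∀ p ∈ E, p.2 ∈ G) {S : ENNReal}
    (hS : ∀ y ∈ G, μ.map X ((fun x => (x, y)) ⁻¹' E) ≤ S) :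
    μ ((fun ω => (X ω, Y ω)) ⁻¹' E) ≤ S * μ (Y ⁻¹' G) := by
  rw [← Measure.map_apply (hX.prodMk hY) hE,
    (indepFun_iff_map_prod_eq_prod_map_map hX.aemeasurable hY.aemeasurable).1 hXY,
    Measure.prod_apply_symm hE, ← Measure.map_apply hY hG, ← lintegral_indicator_const hG]
  refine lintegral_mono fun y => ?_
  by_cases hy : y ∈ G
  · simpa [hy] using hS y hy
  · have : (fun x => (x, y)) ⁻¹' E = ∅ := eq_empty_of_forall_notMem fun x hx => hy (hEG _ hx)
    simp [hy, this]

def ratGrid (b c : ℝ) : Set ℝ := (range ((↑) : ℚ → ℝ) ∩ Ioo b c) ∪ {c}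

lemma countable_ratGrid (b c : ℝ) : (ratGrid b c).Countable :=
  ((countable_range _).mono inter_subset_left).union (countable_singleton c)

lemma right_mem_ratGrid (b c : ℝ) : c ∈ ratGrid b c := Or.inr rfl

lemma ratGrid_subset_Ioc {b c : ℝ} (h : b < c) : ratGrid b c ⊆ Ioc b c := by
  rintro q (⟨-, hq⟩ | rfl)
  exacts [Ioo_subset_Ioc_self hq, right_mem_Ioc.2 h]

lemma forall_Ioc_le_iff_forall_ratGrid {f : ℝ → ℝ} (hf : ∀ τ, ContinuousWithinAt f (Ici τ) τ)
    {b c v : ℝ} (h : b < c) : (∀ s ∈ Ioc b c, f s ≤ v) ↔ ∀ q ∈ ratGrid b c, f q ≤ v := by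
  refine ⟨fun H q hq => H q (ratGrid_subset_Ioc h hq), fun H s hs => ?_⟩
  rcases hs.2.eq_or_lt with rfl | hsc
  · exact H s (right_mem_ratGrid b s)
  -- `s` is a limit from the right of rationals in `(s, c)`
  have hs_mem : s ∈ closure (Ioo s c ∩ range ((↑) : ℚ → ℝ)) := by
    have := closure_mono (Rat.denseRange_cast.open_subset_closure_inter isOpen_Ioo)
      (show s ∈ closure (Ioo s c) by rw [closure_Ioo hsc.ne]; exact left_mem_Icc.2 hsc.le)
    rwa [closure_closure] at this
  exact ((hf s).mono fun q hq => hq.1.1.le).closure_le hs_mem continuousWithinAt_const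
    fun q hq => H q (Or.inl ⟨hq.2, hs.1.trans hq.1.1, hq.1.2⟩)

def gridPathsBelow (s w : ℝ) : Set (ℝ → ℝ) := {f | ∀ q ∈ ratGrid 0 s, f q ≤ w}

lemma measurableSet_setOf_mem_gridPathsBelow {γ : Type*} [MeasurableSpace γ] {f : γ → ℝ → ℝ}
    {w : γ → ℝ} (hf : Measurable f) (hw : Measurable w) (s : ℝ) :
    MeasurableSet {y | f y ∈ gridPathsBelow s (w y)} :=
  measurableSet_forall_mem_le (countable_ratGrid 0 s) (fun q => (measurable_pi_apply q).comp hf)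
    fun _ => hw

namespace CLProcess

variable {P : Measure Ω} (M : CLProcess Ω P)

def path (ω : Ω) (s : ℝ) : ℝ := M.R s ω

def incr (a : ℝ) (ω : Ω) (s : ℝ) : ℝ := M.R (a + s) ω - M.R a ω

def past (a : ℝ) (ω : Ω) (s : Icc (0 : ℝ) a) : ℝ := M.R s ω

def survivalSet (ℓ : ℝ → ℝ) (t : ℝ) : Set Ω := {ω | ∀ s ∈ Ioc 0 t, M.R s ω ≤ ℓ s}

def ruinBetween (a s L₀ L₁ : ℝ) : Set Ω :=
  {ω | (∀ τ ∈ Ioc 0 s, M.R (a + τ) ω ≤ L₁) ∧ ∃ τ ∈ Ioc 0 s, L₀ < M.R (a + τ) ω}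

lemma measurable_path : Measurable M.path := measurable_pi_lambda _ M.meas

lemma measurable_incr (a : ℝ) : Measurable (M.incr a) :=
  measurable_pi_lambda _ fun _ => (M.meas _).sub (M.meas a)

lemma measurable_past (a : ℝ) : Measurable (M.past a) := measurable_pi_lambda _ fun s => M.meas s

lemma indepFun_incr_past {a : ℝ} (ha : 0 ≤ a) : IndepFun (M.incr a) (M.past a) P :=
  M.indep_incr a ha

lemma map_incr {a : ℝ} (ha : 0 ≤ a) : P.map (M.incr a) = P.map M.path := M.stat_incr a ha

lemma continuousWithinAt_incr (a : ℝ) (ω : Ω) (τ : ℝ) :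
    ContinuousWithinAt (M.incr a ω) (Ici τ) τ :=
  ((M.cadlag ω (a + τ)).comp (continuous_const.add continuous_id).continuousWithinAt
    fun _ h => (add_le_add_iff_left a).2 h).sub continuousWithinAt_const

lemma path_preimage_gridPathsBelow {s : ℝ} (hs : 0 < s) (w : ℝ) :
    M.path ⁻¹' gridPathsBelow s w = M.survivalSet (fun _ => w) s := by
  ext ω
  exact (forall_Ioc_le_iff_forall_ratGrid (M.cadlag ω) hs).symm

lemma measurableSet_survivalSet_const {s : ℝ} (hs : 0 < s) (w : ℝ) :
    MeasurableSet (M.survivalSet (fun _ => w) s) :=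
  M.path_preimage_gridPathsBelow hs w ▸ M.measurable_path
    (measurableSet_setOf_mem_gridPathsBelow measurable_id measurable_const s)

lemma ruinBetween_subset {a s L₀ L₁ : ℝ} (hs : 0 < s) :
    M.ruinBetween a s L₀ L₁ ⊆
      {ω | M.incr a ω ∈ gridPathsBelow s (L₁ - M.R a ω) \ gridPathsBelow s (L₀ - M.R a ω)} := by
  rintro ω ⟨hbelow, τ, hτ, hover⟩
  refine ⟨fun q hq => sub_le_sub_right (hbelow q (ratGrid_subset_Ioc hs hq)) _, fun hgrid => ?_⟩
  have := (forall_Ioc_le_iff_forall_ratGrid (M.continuousWithinAt_incr a ω) hs).2 hgrid τ hτ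
  exact (sub_le_sub_iff_right _).1 this |>.not_gt hover

lemma psiFin_eq_one_sub [IsProbabilityMeasure P] {s : ℝ} (hs : 0 < s) (w : ℝ) :
    psiFin P M w s = 1 - P.real (M.survivalSet (fun _ => w) s) := by
  rw [← probReal_compl_eq_one_sub (M.measurableSet_survivalSet_const hs w), psiFin,
    measureReal_def]
  congr 2
  ext ω
  simp [survivalSet, and_assoc]

lemma psiFin_antitone [IsFiniteMeasure P] (s : ℝ) : Antitone fun w => psiFin P M w s :=
  fun _ _ hw => measureReal_mono fun _ ⟨τ, hτ, h⟩ => ⟨τ, hτ, hw.trans_lt h⟩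

lemma psiFin_sub_psiFin_le [IsFiniteMeasure P] {x c L₀ L₁ : ℝ} (hx : x ≤ c) (s : ℝ) :
    psiFin P M (L₀ - x) s - psiFin P M (L₁ - x) s ≤ psiFin P M (L₀ - c) s := by
  have := M.psiFin_antitone s (sub_le_sub_left hx L₀)
  have : 0 ≤ psiFin P M (L₁ - x) s := measureReal_nonneg
  linarith

lemma measureReal_map_incr_sdiff [IsProbabilityMeasure P] {a s w₀ w₁ : ℝ} (ha : 0 ≤ a)
    (hs : 0 < s) (hw : w₀ ≤ w₁) :
    (P.map (M.incr a)).real (gridPathsBelow s w₁ \ gridPathsBelow s w₀)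
      = psiFin P M w₀ s - psiFin P M w₁ s := by
  have hmeas : ∀ w, MeasurableSet (gridPathsBelow s w) := fun _ =>
    measurableSet_setOf_mem_gridPathsBelow measurable_id measurable_const s
  have hsub : M.survivalSet (fun _ => w₀) s ⊆ M.survivalSet (fun _ => w₁) s :=
    fun _ h τ hτ => (h τ hτ).trans hw
  rw [M.map_incr ha, map_measureReal_apply M.measurable_path ((hmeas w₁).diff (hmeas w₀)),
    preimage_sdiff, M.path_preimage_gridPathsBelow hs, M.path_preimage_gridPathsBelow hs,
    measureReal_sdiff hsub (M.measurableSet_survivalSet_const hs w₀),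
    M.psiFin_eq_one_sub hs, M.psiFin_eq_one_sub hs]
  ring

theorem measureReal_inter_ruinBetween_le [IsProbabilityMeasure P] {a s c L₀ L₁ S : ℝ}
    (ha : 0 ≤ a) (hs : 0 < s) (hL : L₀ ≤ L₁) {G : Set (Icc (0 : ℝ) a → ℝ)}
    (hG : MeasurableSet G) (hGc : ∀ z ∈ G, z ⟨a, ha, le_rfl⟩ ≤ c)
    (hS : ∀ x ≤ c, psiFin P M (L₀ - x) s - psiFin P M (L₁ - x) s ≤ S) :
    P.real (M.past a ⁻¹' G ∩ M.ruinBetween a s L₀ L₁) ≤ P.real (M.past a ⁻¹' G) * S := by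
  set x : (Icc (0 : ℝ) a → ℝ) → ℝ := fun z => z ⟨a, ha, le_rfl⟩
  have hx : Measurable x := measurable_pi_apply _
  set E : Set ((ℝ → ℝ) × (Icc (0 : ℝ) a → ℝ)) := Prod.snd ⁻¹' G ∩
    ({p | p.1 ∈ gridPathsBelow s (L₁ - x p.2)} \ {p | p.1 ∈ gridPathsBelow s (L₀ - x p.2)})
  have hE : MeasurableSet E := by
    refine (hG.preimage measurable_snd).inter (.diff ?_ ?_) <;>
    exact measurableSet_setOf_mem_gridPathsBelow measurable_fst
      (measurable_const.sub (hx.comp measurable_snd)) s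
  have hsection : ∀ z ∈ G,
      P.map (M.incr a) ((fun f => (f, z)) ⁻¹' E) ≤ ENNReal.ofReal S := by
    intro z hz
    have : (fun f => (f, z)) ⁻¹' E =
        gridPathsBelow s (L₁ - x z) \ gridPathsBelow s (L₀ - x z) := by
      ext f
      simp [E, hz]
    rw [this, ← ofReal_measureReal, M.measureReal_map_incr_sdiff ha hs (by linarith)]
    exact ENNReal.ofReal_le_ofReal (hS _ (hGc z hz))
  have hS₀ : 0 ≤ S :=
    (sub_nonneg.2 (M.psiFin_antitone s (sub_le_sub_right hL c))).trans (hS c le_rfl)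
  calc P.real (M.past a ⁻¹' G ∩ M.ruinBetween a s L₀ L₁)
      ≤ P.real ((fun ω => (M.incr a ω, M.past a ω)) ⁻¹' E) :=
        measureReal_mono fun ω ⟨hωG, hω⟩ => ⟨hωG, M.ruinBetween_subset hs hω⟩
    _ ≤ (ENNReal.ofReal S * P (M.past a ⁻¹' G)).toReal :=
        ENNReal.toReal_mono (by finiteness)
          ((M.indepFun_incr_past ha).measure_preimage_le_mul (M.measurable_incr a)
            (M.measurable_past a) hE hG (fun _ hp => hp.1) hsection)
    _ = P.real (M.past a ⁻¹' G) * S := by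
        rw [ENNReal.toReal_mul, ENNReal.toReal_ofReal hS₀, mul_comm, measureReal_def]

end CLProcess

section Levels

variable {A u : ℕ → ℝ} {r : ℝ} {k : ℕ}

lemma exists_mem_Ioc_of_mem_Ioc_zero (hA0 : A 0 = 0) {n : ℕ} {s : ℝ}
    (hs : s ∈ Ioc 0 (A n)) : ∃ m < n, s ∈ Ioc (A m) (A (m + 1)) := by
  have := Ioc_subset_biUnion_Ioc n A (hA0 ▸ hs)
  simpa only [mem_iUnion, Finset.mem_range, exists_prop] using this

variable (hA : StrictMonoOn A (Iic k))
include hA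

lemma zero_le_apply_of_le (hA0 : A 0 = 0) {n : ℕ} (hn : n ≤ k) : 0 ≤ A n :=
  hA0 ▸ hA.monotoneOn (mem_Iic.2 (Nat.zero_le k)) (mem_Iic.2 hn) (Nat.zero_le n)

lemma lvl_of_mem_Ioc {K m : ℕ} (hmK : m < K) (hK : K ≤ k) {s : ℝ}
    (hs : s ∈ Ioc (A m) (A (m + 1))) : lvl A u r k K s = ∑ j ∈ Finset.range (m + 1), u j := by
  have hle : ∀ {i j}, i ≤ j → j ≤ k → A i ≤ A j := fun hij hj =>
    hA.monotoneOn (mem_Iic.2 (hij.trans hj)) (mem_Iic.2 hj) hij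
  have hfilter : (Finset.range (k + 1)).filter (fun j => A j < s) = Finset.range (m + 1) := by
    ext j
    simp only [Finset.mem_filter, Finset.mem_range]
    constructor
    · rintro ⟨hj, hAj⟩
      by_contra! hjm
      exact (hs.2.trans (hle hjm (by omega))).not_gt hAj
    · exact fun hj => ⟨by omega, (hle (by omega) (by omega)).trans_lt hs.1⟩
  rw [lvl, if_neg (not_lt.2 (hs.2.trans (hle hmK hK))), hfilter, Finset.card_range]

lemma lvl_apply_succ {K m : ℕ} (hmK : m < K) (hK : K ≤ k) :
    lvl A u r k K (A (m + 1)) = ∑ j ∈ Finset.range (m + 1), u j :=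
  lvl_of_mem_Ioc hA hmK hK
    (right_mem_Ioc.2 (hA (mem_Iic.2 (by omega)) (mem_Iic.2 (by omega)) (lt_add_one m)))

lemma lvl_eq_lvl_of_mem_Ioc_zero (hA0 : A 0 = 0) {n K : ℕ} (hnK : n ≤ K) (hK : K ≤ k) {s : ℝ}
    (hs : s ∈ Ioc 0 (A n)) : lvl A u r k K s = lvl A u r k k s := by
  obtain ⟨m, hm, hsm⟩ := exists_mem_Ioc_of_mem_Ioc_zero hA0 hs
  rw [lvl_of_mem_Ioc hA (by omega) hK hsm, lvl_of_mem_Ioc hA (by omega) le_rfl hsm]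

lemma lvl_succ_le_lvl (hu : ∀ j, 0 ≤ u j) {n : ℕ} (hn : n < k) :
    lvl A u r k (n + 1) (A (n + 1)) ≤ lvl A u r k n (A (n + 1)) := by
  rw [lvl_apply_succ hA (lt_add_one n) hn,
    lvl, if_pos (hA (mem_Iic.2 hn.le) (mem_Iic.2 hn) (lt_add_one n))]
  exact le_add_of_nonneg_right
    (Finset.sum_nonneg fun j _ => mul_nonneg (hu j) (Real.exp_pos _).le)

lemma lvl_succ_sub_lvl {n : ℕ} (hn : n + 1 < k) :
    lvl A u r k (n + 2) (A (n + 2)) - lvl A u r k (n + 1) (A (n + 1)) = u (n + 1) := by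
  show lvl A u r k (n + 1 + 1) (A (n + 1 + 1)) - _ = _
  rw [lvl_apply_succ hA (lt_add_one _) hn,
    lvl_apply_succ hA (lt_add_one n) (by omega), Finset.sum_range_succ]
  ring

end Levels

def pastGrid (A : ℕ → ℝ) (n : ℕ) : Set ℝ := ⋃ m ∈ Iio n, ratGrid (A m) (A (m + 1))

lemma countable_pastGrid (A : ℕ → ℝ) (n : ℕ) : (pastGrid A n).Countable :=
  (finite_Iio n).countable.biUnion fun _ _ => countable_ratGrid _ _

lemma right_mem_pastGrid (A : ℕ → ℝ) (m : ℕ) : A (m + 1) ∈ pastGrid A (m + 1) :=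
  mem_biUnion (mem_Iio.2 (lt_add_one m)) (right_mem_ratGrid _ _)

lemma pastGrid_subset_Ioc {A : ℕ → ℝ} {k n : ℕ} (hA0 : A 0 = 0) (hA : StrictMonoOn A (Iic k))
    (hn : n ≤ k) : pastGrid A n ⊆ Ioc 0 (A n) := by
  simp only [pastGrid, iUnion_subset_iff, mem_Iio]
  intro m hm q hq
  have hq := ratGrid_subset_Ioc (hA (mem_Iic.2 (by omega)) (mem_Iic.2 (by omega)) (lt_add_one m)) hq
  exact ⟨(zero_le_apply_of_le hA hA0 (by omega)).trans_lt hq.1,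
    hq.2.trans (hA.monotoneOn (mem_Iic.2 (by omega)) (mem_Iic.2 hn) hm)⟩

def pathsBelowOn (a : ℝ) (D : Set ℝ) (ℓ : ℝ → ℝ) : Set (Icc (0 : ℝ) a → ℝ) :=
  {z | ∀ q ∈ ((↑) : Icc (0 : ℝ) a → ℝ) ⁻¹' D, z q ≤ ℓ q}

lemma measurableSet_pathsBelowOn (a : ℝ) {D : Set ℝ} (hD : D.Countable) (ℓ : ℝ → ℝ) :
    MeasurableSet (pathsBelowOn a D ℓ) :=
  measurableSet_forall_mem_le (F := fun (q : Icc (0 : ℝ) a) (z : Icc (0 : ℝ) a → ℝ) => z q)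
    (G := fun q _ => ℓ q) (hD.preimage Subtype.val_injective) measurable_pi_apply
    fun _ => measurable_const

namespace CLProcess

variable {P : Measure Ω} (M : CLProcess Ω P) {A u : ℕ → ℝ} {r : ℝ} {k : ℕ}

lemma survivalSet_lvl_eq_preimage_past (hA0 : A 0 = 0) (hA : StrictMonoOn A (Iic k))
    {n K : ℕ} (hnK : n ≤ K) (hK : K ≤ k) :
    M.survivalSet (lvl A u r k K) (A n) =
      M.past (A n) ⁻¹' pathsBelowOn (A n) (pastGrid A n) (lvl A u r k K) := by
  ext ω
  refine ⟨fun h q hq => h q (pastGrid_subset_Ioc hA0 hA (hnK.trans hK) hq), fun h s hs => ?_⟩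
  obtain ⟨m, hm, hsm⟩ := exists_mem_Ioc_of_mem_Ioc_zero hA0 hs
  have hAm : A m < A (m + 1) := hsm.1.trans_le hsm.2
  rw [lvl_of_mem_Ioc hA (by omega) hK hsm]
  refine (forall_Ioc_le_iff_forall_ratGrid (M.cadlag ω) hAm).2 (fun q hq => ?_) s hsm
  have hq_past : q ∈ pastGrid A n := mem_biUnion (mem_Iio.2 hm) hq
  have hq_Ioc := pastGrid_subset_Ioc hA0 hA (hnK.trans hK) hq_past
  have := h ⟨q, hq_Ioc.1.le, hq_Ioc.2⟩ hq_past
  rwa [lvl_of_mem_Ioc hA (by omega) hK (ratGrid_subset_Ioc hAm hq)] at this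

lemma survivalSet_sdiff_subset (hA0 : A 0 = 0) (hA : StrictMonoOn A (Iic k)) {n : ℕ}
    (hn : n < k) {t : ℝ} (ht₁ : A n < t) (ht₂ : t ≤ A (n + 1)) :
    M.survivalSet (lvl A u r k n) t \ M.survivalSet (lvl A u r k (n + 1)) t ⊆
      M.survivalSet (lvl A u r k k) (A n) ∩ M.ruinBetween (A n) (t - A n)
        (lvl A u r k (n + 1) (A (n + 1))) (lvl A u r k n (A (n + 1))) := by
  rintro ω ⟨hprev, hcur⟩
  have hAn := zero_le_apply_of_le hA hA0 hn.le
  refine ⟨fun s hs => ?_, fun τ hτ => ?_, ?_⟩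
  · rw [← lvl_eq_lvl_of_mem_Ioc_zero hA hA0 le_rfl hn.le hs]
    exact hprev s ⟨hs.1, hs.2.trans ht₁.le⟩
  · calc M.R (A n + τ) ω ≤ lvl A u r k n (A n + τ) :=
          hprev (A n + τ) ⟨by linarith [hτ.1], by linarith [hτ.2]⟩
      _ = lvl A u r k n (A (n + 1)) := by
          rw [lvl, lvl, if_pos (ht₁.trans_le ht₂), if_pos (lt_add_of_pos_right _ hτ.1)]
  · obtain ⟨s, hs, hover⟩ : ∃ s ∈ Ioc 0 t, lvl A u r k (n + 1) s < M.R s ω := by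
      simpa [survivalSet, and_assoc] using hcur
    rcases le_or_gt s (A n) with hsa | hsa
    · rw [lvl_eq_lvl_of_mem_Ioc_zero hA hA0 (Nat.le_succ n) hn ⟨hs.1, hsa⟩,
        ← lvl_eq_lvl_of_mem_Ioc_zero hA hA0 le_rfl hn.le ⟨hs.1, hsa⟩] at hover
      exact absurd (hprev s hs) hover.not_ge
    · refine ⟨s - A n, ⟨by linarith, by linarith [hs.2]⟩, ?_⟩
      rw [add_sub_cancel]
      rwa [lvl_of_mem_Ioc hA (lt_add_one n) hn ⟨hsa, hs.2.trans ht₂⟩,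
        ← lvl_apply_succ hA (lt_add_one n) hn] at hover

end CLProcess

theorem telescoping_term_upper_bound_general
    (P : Measure Ω) [IsProbabilityMeasure P] (M : CLProcess Ω P)
    (A u : ℕ → ℝ) (r : ℝ) (k : ℕ)
    (hA0 : A 0 = 0) (hAmono : ∀ i, i < k → A i < A (i + 1))
    (hu : ∀ j, 0 < u j)
    (i : ℕ) (hi2 : 2 ≤ i) (hik : i ≤ k)
    (t : ℝ) (ht1 : A (i - 1) < t) (ht2 : t ≤ A i) :
    modelSurv P M A u r k (i - 1) t - modelSurv P M A u r k i t
        ≤ (P (Bset P M A u r k (i - 1))).toReal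
          * sSup ((fun x : ℝ =>
              psiFin P M (lvl A u r k i (A i) - x) (t - A (i - 1))
                - psiFin P M (lvl A u r k (i - 1) (A i) - x) (t - A (i - 1)))
            '' Set.Iic (lvl A u r k (i - 1) (A (i - 1))))
    ∧ (P (Bset P M A u r k (i - 1))).toReal
          * sSup ((fun x : ℝ =>
              psiFin P M (lvl A u r k i (A i) - x) (t - A (i - 1))
                - psiFin P M (lvl A u r k (i - 1) (A i) - x) (t - A (i - 1)))
            '' Set.Iic (lvl A u r k (i - 1) (A (i - 1))))
        ≤ (P (Bset P M A u r k (i - 1))).toReal * psiFin P M (u (i - 1)) (t - A (i - 1)) := by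
  obtain ⟨n, rfl⟩ : ∃ n, i = n + 2 := ⟨i - 2, by omega⟩
  simp only [show n + 2 - 1 = n + 1 from rfl] at ht1 ⊢
  have hA : StrictMonoOn A (Iic k) := strictMonoOn_Iic_of_lt_succ hAmono
  have hAn := zero_le_apply_of_le hA hA0 (n := n + 1) (by omega)
  have hbound : ∀ x ∈ Iic (lvl A u r k (n + 1) (A (n + 1))),
      psiFin P M (lvl A u r k (n + 2) (A (n + 2)) - x) (t - A (n + 1))
        - psiFin P M (lvl A u r k (n + 1) (A (n + 2)) - x) (t - A (n + 1))
      ≤ psiFin P M (u (n + 1)) (t - A (n + 1)) := fun x hx => by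
    rw [← lvl_succ_sub_lvl (u := u) (r := r) (n := n) hA (by omega)]
    exact M.psiFin_sub_psiFin_le hx _
  have hpast_le : ∀ z ∈ pathsBelowOn (A (n + 1)) (pastGrid A (n + 1)) (lvl A u r k k),
      z ⟨A (n + 1), hAn, le_rfl⟩ ≤ lvl A u r k (n + 1) (A (n + 1)) := fun z hz => by
    rw [lvl_apply_succ hA (lt_add_one n) (by omega), ← lvl_apply_succ hA (by omega) le_rfl]
    exact hz _ (right_mem_pastGrid A n)
  refine ⟨?_, mul_le_mul_of_nonneg_left
    (csSup_le (nonempty_Iic.image _) (forall_mem_image.2 hbound)) measureReal_nonneg⟩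
  rw [Bset, ← CLProcess.survivalSet,
    M.survivalSet_lvl_eq_preimage_past hA0 hA (by omega) le_rfl]
  calc _ ≤ P.real (M.survivalSet (lvl A u r k (n + 1)) t \
          M.survivalSet (lvl A u r k (n + 2)) t) := le_measureReal_sdiff
    _ ≤ _ := by
        refine measureReal_mono ((M.survivalSet_sdiff_subset hA0 hA (by omega) ht1 ht2).trans ?_)
        rw [M.survivalSet_lvl_eq_preimage_past hA0 hA (by omega) le_rfl]
    _ ≤ _ := M.measureReal_inter_ruinBetween_le hAn (sub_pos.2 ht1)
        (lvl_succ_le_lvl hA (fun j => (hu j).le) (by omega))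
        (measurableSet_pathsBelowOn _ (countable_pastGrid A _) _) hpast_le
        fun x hx => le_csSup ⟨_, forall_mem_image.2 hbound⟩ (mem_image_of_mem _ hx)

/-- upper bound for one telescoping term. For `2 ≤ i ≤ k` and
`t ∈ (A_{i−1}, A_i]`,
`P[T^{M^{i−1}}>t] − P[T^{M^i}>t]`
`≤ P(B_{i−1})·sup_{x ≤ l^{i−1}_{A_{i−1}}}[ψ(l^i_{A_i}−x, t−A_{i−1}) − ψ(l^{i−1}_{A_i}−x, t−A_{i−1})]`
`≤ P(B_{i−1})·ψ(u_{i−1}, t−A_{i−1})`. -/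
theorem telescoping_term_upper_bound
    (P : Measure Ω) [IsProbabilityMeasure P] (M : CLProcess Ω P)
    (A u : ℕ → ℝ) (r : ℝ) (k : ℕ) (hk : 1 ≤ k)
    (hA0 : A 0 = 0) (hAmono : ∀ i, i < k → A i < A (i + 1))
    (hu : ∀ j, 0 < u j) (hr : 0 < r)
    (i : ℕ) (hi2 : 2 ≤ i) (hik : i ≤ k)
    (t : ℝ) (ht1 : A (i - 1) < t) (ht2 : t ≤ A i) :
    modelSurv P M A u r k (i - 1) t - modelSurv P M A u r k i t
        ≤ (P (Bset P M A u r k (i - 1))).toReal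
          * sSup ((fun x : ℝ =>
              psiFin P M (lvl A u r k i (A i) - x) (t - A (i - 1))
                - psiFin P M (lvl A u r k (i - 1) (A i) - x) (t - A (i - 1)))
            '' Set.Iic (lvl A u r k (i - 1) (A (i - 1))))
    ∧ (P (Bset P M A u r k (i - 1))).toReal
          * sSup ((fun x : ℝ =>
              psiFin P M (lvl A u r k i (A i) - x) (t - A (i - 1))
                - psiFin P M (lvl A u r k (i - 1) (A i) - x) (t - A (i - 1)))
            '' Set.Iic (lvl A u r k (i - 1) (A (i - 1))))
        ≤ (P (Bset P M A u r k (i - 1))).toReal * psiFin P M (u (i - 1)) (t - A (i - 1)) :=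
  telescoping_term_upper_bound_general P M A u r k hA0 hAmono hu i hi2 hik t ht1 ht2
end
end
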